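/- For a convex (supermodular) continuous capacity ν on a measurable space X, the Choquet integral is superlinear: for all measurable f, g : X → [0,∞] and α, β ≥ 0, ∮(αf + βg) dν ≥ α∮f dν + β∮g dν. -/

import Mathlib

open MeasureTheory
open scoped ENNReal NNReal

/-- The Choquet integral of `f : X → [0,∞]` against a set function `ν`:
`∮ f dν = ∫₀^∞ ν({x | f(x) > t}) dt`. -/
noncomputable def choquet {X : Type*} [MeasurableSpace X]
    (ν : Set X → ℝ≥0∞) (f : X → ℝ≥0∞) : ℝ≥0∞ :=
  ∫⁻ t in Set.Ioi (0 : ℝ), ν {x | ENNReal.ofReal t < f x}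

/-- `ν` is an (ω-)capacity on the Borel sets of `X`: it vanishes on `∅`, takes finite
values, is monotone, and is continuous along increasing sequences of measurable sets. -/
def IsCapacity {X : Type*} [MeasurableSpace X] (ν : Set X → ℝ≥0∞) : Prop :=
  ν ∅ = 0 ∧
  (∀ s : Set X, MeasurableSet s → ν s ≠ ∞) ∧
  (∀ s t : Set X, MeasurableSet s → MeasurableSet t → s ⊆ t → ν s ≤ ν t) ∧
  (∀ U : ℕ → Set X, (∀ n, MeasurableSet (U n)) → Monotone U →
    ν (⋃ n, U n) = ⨆ n, ν (U n))

/-!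
Positive homogeneity is the substitution `t ↦ α t` in the defining integral. For
superadditivity, adding `c • 1_B` to `f` raises the Choquet integral by at least `c ν(B)`:
at level `t` the new superlevel set is `{f > t} ∪ (B ∩ {f + c > t})`, so supermodularity
against `{f > t}` reduces the claim to the translation formula
`∮ (f + c) dμ = c μ(X) + ∮ f dμ` for the set function `μ s = ν (B ∩ s)`. Iterating this
along the staircase `∑ₖ c • 1_{g > (k+1)c} ≤ g` gives
`∮ f + ∫_{[c, (K+1)c)} ν{g > t} dt ≤ ∮ (f + g)`, and the windows `[c, (K+1)c)` exhaust
`(0, ∞)`.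
-/

open Set

lemma setLIntegral_Ioi_comp_add_right (H : ℝ → ℝ≥0∞) (c : ℝ) :
    ∫⁻ t in Ioi 0, H (t + c) = ∫⁻ t in Ioi c, H t := by
  have hpre : (· + c) ⁻¹' Ioi c = Ioi (0 : ℝ) := by ext t; simp
  rw [← hpre]
  exact (measurePreserving_add_right volume c).setLIntegral_comp_preimage_emb
    (measurableEmbedding_addRight c) H (Ioi c)

lemma setLIntegral_Ioi_comp_mul_left (H : ℝ → ℝ≥0∞) {a : ℝ} (ha : 0 < a) :
    ∫⁻ t in Ioi 0, H (a * t) = ENNReal.ofReal a⁻¹ * ∫⁻ t in Ioi 0, H t := by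
  have hmp : MeasurePreserving (a * ·) volume (ENNReal.ofReal |a⁻¹| • volume) :=
    ⟨measurable_const_mul a, Real.map_volume_mul_left ha.ne'⟩
  have hpre : (a * ·) ⁻¹' Ioi 0 = Ioi (0 : ℝ) := by ext t; simp [ha]
  conv_lhs => rw [← hpre]
  rw [hmp.setLIntegral_comp_preimage_emb
      (MeasurableEquiv.mulLeft₀ a ha.ne').measurableEmbedding, Measure.restrict_smul,
    lintegral_smul_measure, abs_of_pos (inv_pos.2 ha), smul_eq_mul]

section
variable {X : Type*} [MeasurableSpace X]

lemma choquet_const_mul {ν : Set X → ℝ≥0∞} (hν : ν ∅ = 0) (f : X → ℝ≥0∞) (α : ℝ≥0) :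
    choquet ν (fun x => α * f x) = α * choquet ν f := by
  rcases eq_zero_or_pos α with rfl | hα
  · simp [choquet, hν]
  have hα' : (α : ℝ≥0∞) ≠ 0 := by exact_mod_cast hα.ne'
  have hlevel : ∀ t : ℝ,
      {x | ENNReal.ofReal t < α * f x} = {x | ENNReal.ofReal ((α : ℝ)⁻¹ * t) < f x} := by
    intro t
    ext x
    rw [mem_ofPred_eq, mem_ofPred_eq, inv_mul_eq_div,
      ENNReal.ofReal_div_of_pos (by exact_mod_cast hα), ENNReal.ofReal_coe_nnreal,
      ENNReal.div_lt_iff (Or.inl hα') (Or.inl ENNReal.coe_ne_top), mul_comm]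
  simp only [choquet, hlevel]
  rw [setLIntegral_Ioi_comp_mul_left (fun s => ν {x | ENNReal.ofReal s < f x}) (by positivity),
    inv_inv, ENNReal.ofReal_coe_nnreal]

lemma choquet_add_const (ν : Set X → ℝ≥0∞) (f : X → ℝ≥0∞) {c : ℝ} (hc : 0 ≤ c) :
    choquet ν (fun x => f x + ENNReal.ofReal c) = ENNReal.ofReal c * ν univ + choquet ν f := by
  rcases hc.eq_or_lt with rfl | hc
  · simp [choquet]
  set H : ℝ → ℝ≥0∞ := fun t => ν {x | ENNReal.ofReal t < f x + ENNReal.ofReal c}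
  have hbelow : EqOn H (fun _ => ν univ) (Ioo 0 c) := fun t ht =>
    congrArg ν <| eq_univ_of_forall fun _ =>
      ((ENNReal.ofReal_lt_ofReal_iff hc).2 ht.2).trans_le le_add_self
  have hshift : EqOn (fun t => H (t + c)) (fun t => ν {x | ENNReal.ofReal t < f x}) (Ioi 0) := by
    intro t ht
    simp only [H, ENNReal.ofReal_add (le_of_lt ht) hc.le,
      ENNReal.add_lt_add_iff_right ENNReal.ofReal_ne_top]
  calc choquet ν (fun x => f x + ENNReal.ofReal c)
      = (∫⁻ t in Ioo 0 c, H t) + ∫⁻ t in Ioi c, H t := by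
        rw [choquet, ← Ioo_union_Ici_eq_Ioi hc, lintegral_union measurableSet_Ici
          ((Iio_disjoint_Ici le_rfl).mono_left Ioo_subset_Iio_self),
          setLIntegral_congr Ioi_ae_eq_Ici]
    _ = ENNReal.ofReal c * ν univ + choquet ν f := by
        rw [setLIntegral_congr_fun measurableSet_Ioo hbelow, setLIntegral_const, Real.volume_Ioo,
          sub_zero, mul_comm, ← setLIntegral_Ioi_comp_add_right,
          setLIntegral_congr_fun measurableSet_Ioi hshift, choquet]
end

section
variable {X : Type*}

noncomputable def staircase (G : X → ℝ≥0∞) (c : ℝ) (K : ℕ) (x : X) : ℝ≥0∞ :=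
  ∑ k ∈ Finset.range K,
    {y | ENNReal.ofReal ((k + 1) * c) < G y}.indicator (fun _ => ENNReal.ofReal c) x

lemma staircase_le (G : X → ℝ≥0∞) (c : ℝ) (K : ℕ) : staircase G c K ≤ G := by
  intro x
  induction K with
  | zero => simp [staircase]
  | succ K ih =>
    by_cases hx : ENNReal.ofReal ((K + 1) * c) < G x
    · calc staircase G c (K + 1) x ≤ ∑ _k ∈ Finset.range (K + 1), ENNReal.ofReal c :=
            Finset.sum_le_sum fun _ _ => indicator_le_self _ _ x
        _ = ENNReal.ofReal ((K + 1) * c) := by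
            rw [Finset.sum_const, Finset.card_range, nsmul_eq_mul,
              ENNReal.ofReal_mul (by positivity)]
            norm_cast
        _ ≤ G x := hx.le
    · rw [staircase, Finset.sum_range_succ,
        indicator_of_notMem (s := {y | ENNReal.ofReal ((K + 1) * c) < G y}) hx, add_zero]
      exact ih

lemma setOf_lt_add_indicator (s a : ℝ≥0∞) (f : X → ℝ≥0∞) (B : Set X) :
    {x | s < f x + B.indicator (fun _ => a) x} = {x | s < f x} ∪ (B ∩ {x | s < f x + a}) := by
  ext x
  by_cases hx : x ∈ B
  · simp only [mem_union, mem_ofPred_eq, mem_inter_iff, hx, true_and, indicator_of_mem,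
      iff_or_self]
    exact fun h => h.trans_le le_self_add
  · simp [hx]

end

section
variable {X : Type*} [MeasurableSpace X] {ν : Set X → ℝ≥0∞}

def IsSupermodular (ν : Set X → ℝ≥0∞) : Prop :=
  ∀ s t : Set X, MeasurableSet s → MeasurableSet t → ν s + ν t ≤ ν (s ∪ t) + ν (s ∩ t)

lemma measurable_staircase {G : X → ℝ≥0∞} (hG : Measurable G) (c : ℝ) (K : ℕ) :
    Measurable (staircase G c K) :=
  Finset.measurable_sum _ fun _ _ =>
    measurable_const.indicator (measurableSet_lt measurable_const hG)

lemma antitone_superlevel (hmono : MonotoneOn ν {s | MeasurableSet s}) {f : X → ℝ≥0∞}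
    (hf : Measurable f) : Antitone fun t : ℝ => ν {x | ENNReal.ofReal t < f x} := fun _ _ hst =>
  hmono (measurableSet_lt measurable_const hf) (measurableSet_lt measurable_const hf)
    fun _ hx => (ENNReal.ofReal_le_ofReal hst).trans_lt hx

lemma choquet_mono (hmono : MonotoneOn ν {s | MeasurableSet s}) {f g : X → ℝ≥0∞}
    (hf : Measurable f) (hg : Measurable g) (hfg : f ≤ g) : choquet ν f ≤ choquet ν g :=
  lintegral_mono fun _ => hmono (measurableSet_lt measurable_const hf)
    (measurableSet_lt measurable_const hg) fun x hx => hx.trans_le (hfg x)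

lemma le_choquet_add_indicator (hmono : MonotoneOn ν {s | MeasurableSet s})
    (hsuper : IsSupermodular ν) {f : X → ℝ≥0∞} (hf : Measurable f) {B : Set X}
    (hB : MeasurableSet B) {c : ℝ} (hc : 0 ≤ c) :
    choquet ν f + ENNReal.ofReal c * ν B ≤
      choquet ν (fun x => f x + B.indicator (fun _ => ENNReal.ofReal c) x) := by
  set fB := fun x => f x + B.indicator (fun _ => ENNReal.ofReal c) x
  by_cases hfin : choquet ν f = ∞
  · have hle := choquet_mono hmono hf (hf.add (measurable_const.indicator hB)) (g := fB)
      fun _ => le_self_add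
    rw [hfin, top_le_iff] at hle
    rw [hfin, top_add, hle]
  set νB : Set X → ℝ≥0∞ := fun s => ν (B ∩ s)
  have hmonoB : MonotoneOn νB {s | MeasurableSet s} := fun s hs t ht hst =>
    hmono (hB.inter hs) (hB.inter ht) (inter_subset_inter_right B hst)
  have hfinB : choquet νB f ≠ ∞ := ne_top_of_le_ne_top hfin <| lintegral_mono fun _ =>
    hmono (hB.inter (measurableSet_lt measurable_const hf)) (measurableSet_lt measurable_const hf)
      inter_subset_right
  have hshiftB : choquet νB (fun x => f x + ENNReal.ofReal c) =
      ENNReal.ofReal c * ν B + choquet νB f := by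
    simpa [νB] using choquet_add_const νB f hc
  have hlevelwise : ∀ t : ℝ,
      ν {x | ENNReal.ofReal t < f x} + νB {x | ENNReal.ofReal t < f x + ENNReal.ofReal c}
        ≤ ν {x | ENNReal.ofReal t < fB x} + νB {x | ENNReal.ofReal t < f x} := by
    intro t
    have hinter : {x | ENNReal.ofReal t < f x} ∩
        (B ∩ {x | ENNReal.ofReal t < f x + ENNReal.ofReal c}) =
          B ∩ {x | ENNReal.ofReal t < f x} := by
      ext x
      simp only [mem_inter_iff, mem_ofPred_eq]
      exact ⟨fun ⟨h, hB, _⟩ => ⟨hB, h⟩, fun ⟨hB, h⟩ => ⟨h, hB, h.trans_le le_self_add⟩⟩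
    simp only [νB, fB]
    rw [setOf_lt_add_indicator, ← hinter]
    exact hsuper _ _ (measurableSet_lt measurable_const hf)
      (hB.inter (measurableSet_lt measurable_const (hf.add_const _)))
  refine (ENNReal.add_le_add_iff_right hfinB).1 ?_
  calc choquet ν f + ENNReal.ofReal c * ν B + choquet νB f
      = choquet ν f + choquet νB (fun x => f x + ENNReal.ofReal c) := by rw [hshiftB, add_assoc]
    _ ≤ ∫⁻ t in Ioi 0, (ν {x | ENNReal.ofReal t < f x}
          + νB {x | ENNReal.ofReal t < f x + ENNReal.ofReal c}) := le_lintegral_add _ _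
    _ ≤ ∫⁻ t in Ioi 0, (ν {x | ENNReal.ofReal t < fB x} + νB {x | ENNReal.ofReal t < f x}) :=
        lintegral_mono hlevelwise
    _ = choquet ν fB + choquet νB f :=
        lintegral_add_right _ (antitone_superlevel hmonoB hf).measurable

lemma le_choquet_add_staircase (hmono : MonotoneOn ν {s | MeasurableSet s})
    (hsuper : IsSupermodular ν) {F G : X → ℝ≥0∞} (hF : Measurable F) (hG : Measurable G)
    {c : ℝ} (hc : 0 ≤ c) (K : ℕ) :
    choquet ν F + ∫⁻ t in Ico c ((K + 1) * c), ν {x | ENNReal.ofReal t < G x} ≤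
      choquet ν (fun x => F x + staircase G c K x) := by
  induction K with
  | zero => simp [staircase]
  | succ K ih =>
    set B := {y | ENNReal.ofReal ((K + 1) * c) < G y}
    have hslab : ∫⁻ t in Ico ((K + 1) * c) ((K + 1 + 1) * c), ν {x | ENNReal.ofReal t < G x}
        ≤ ENNReal.ofReal c * ν B :=
      calc _ ≤ ∫⁻ t in Ico ((K + 1) * c) ((K + 1 + 1) * c), ν B :=
            setLIntegral_mono measurable_const fun t ht =>
              hmono (measurableSet_lt measurable_const hG) (measurableSet_lt measurable_const hG)
                fun x hx => (ENNReal.ofReal_le_ofReal ht.1).trans_lt hx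
        _ = ENNReal.ofReal c * ν B := by
            rw [setLIntegral_const, Real.volume_Ico, mul_comm]
            ring_nf
    have hsplit : Ico c ((K + 1 + 1) * c) =
        Ico c ((K + 1) * c) ∪ Ico ((K + 1) * c) ((K + 1 + 1) * c) :=
      (Ico_union_Ico_eq_Ico (by nlinarith [K.cast_nonneg (α := ℝ)]) (by nlinarith)).symm
    calc _ ≤ choquet ν F + (∫⁻ t in Ico c ((K + 1) * c), ν {x | ENNReal.ofReal t < G x}) +
          ∫⁻ t in Ico ((K + 1) * c) ((K + 1 + 1) * c), ν {x | ENNReal.ofReal t < G x} := by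
          rw [add_assoc]
          gcongr
          push_cast
          rw [hsplit]
          exact lintegral_union_le _ _ _
      _ ≤ _ := add_le_add ih hslab
      _ ≤ _ := le_choquet_add_indicator hmono hsuper (hF.add (measurable_staircase hG c K))
        (measurableSet_lt measurable_const hG) hc
      _ = _ := by simp only [staircase, Finset.sum_range_succ, Pi.add_apply, add_assoc]

lemma choquet_add_setLIntegral_Ico_le (hmono : MonotoneOn ν {s | MeasurableSet s})
    (hsuper : IsSupermodular ν) {F G : X → ℝ≥0∞} (hF : Measurable F) (hG : Measurable G)
    {a : ℝ} (ha : 0 < a) (b : ℝ) :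
    choquet ν F + ∫⁻ t in Ico a b, ν {x | ENNReal.ofReal t < G x} ≤
      choquet ν (fun x => F x + G x) := by
  set K := ⌈b / a⌉₊
  have hb : b ≤ (K + 1) * a := by
    have := Nat.le_ceil (b / a)
    rw [div_le_iff₀ ha] at this
    nlinarith
  calc _ ≤ choquet ν F + ∫⁻ t in Ico a ((K + 1) * a), ν {x | ENNReal.ofReal t < G x} :=
        add_le_add le_rfl (lintegral_mono_set (Ico_subset_Ico_right hb))
    _ ≤ _ := le_choquet_add_staircase hmono hsuper hF hG ha.le K
    _ ≤ _ := choquet_mono hmono (hF.add (measurable_staircase hG a K)) (hF.add hG)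
        fun x => add_le_add le_rfl (staircase_le G a K x)

lemma iUnion_Ico_inv_succ_succ : ⋃ n : ℕ, Ico ((n : ℝ) + 1)⁻¹ (n + 1) = Ioi 0 := by
  ext t
  simp only [mem_iUnion, mem_Ico, mem_Ioi]
  constructor
  · rintro ⟨n, hn, -⟩
    exact (by positivity : 0 < ((n : ℝ) + 1)⁻¹).trans_le hn
  · intro ht
    obtain ⟨n, hn⟩ := exists_nat_gt (max t t⁻¹)
    refine ⟨n, inv_le_of_inv_le₀ ht ?_, ?_⟩ <;>
      linarith [le_max_left t t⁻¹, le_max_right t t⁻¹]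

lemma le_choquet_add (hmono : MonotoneOn ν {s | MeasurableSet s})
    (hsuper : IsSupermodular ν) {F G : X → ℝ≥0∞} (hF : Measurable F) (hG : Measurable G) :
    choquet ν F + choquet ν G ≤ choquet ν (fun x => F x + G x) := by
  have hdir : Directed (· ⊆ ·) fun n : ℕ => Ico ((n : ℝ) + 1)⁻¹ (n + 1) :=
    Monotone.directed_le fun m n hmn =>
      Ico_subset_Ico (inv_anti₀ (by positivity) (by gcongr)) (by gcongr)
  calc choquet ν F + choquet ν G
      = choquet ν F +
          ⨆ n : ℕ, ∫⁻ t in Ico ((n : ℝ) + 1)⁻¹ (n + 1), ν {x | ENNReal.ofReal t < G x} := by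
        rw [← setLIntegral_iUnion_of_directed _ hdir, iUnion_Ico_inv_succ_succ]
        rfl
    _ ≤ choquet ν (fun x => F x + G x) := by
        rw [ENNReal.add_iSup]
        exact iSup_le fun n =>
          choquet_add_setLIntegral_Ico_le hmono hsuper hF hG (by positivity) _

end

/-- For a convex (supermodular) continuous capacity, the Choquet integral is superlinear:
`∮ (αf + βg) dν ≥ α ∮f dν + β ∮g dν` for all measurable `f, g : X → [0,∞]` and all
scalars `α, β ≥ 0`. -/
theorem choquet_superlinear_of_supermodular {X : Type*} [MeasurableSpace X]
    (ν : Set X → ℝ≥0∞) (hν : IsCapacity ν)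
    (hsuper : ∀ s t : Set X, MeasurableSet s → MeasurableSet t →
      ν s + ν t ≤ ν (s ∪ t) + ν (s ∩ t))
    (f g : X → ℝ≥0∞) (hf : Measurable f) (hg : Measurable g) (α β : ℝ≥0) :
    α * choquet ν f + β * choquet ν g ≤
      choquet ν (fun x => α * f x + β * g x) := by
  have hmono : MonotoneOn ν {s | MeasurableSet s} := fun s hs t ht => hν.2.2.1 s t hs ht
  rw [← choquet_const_mul hν.1, ← choquet_const_mul hν.1]
  exact le_choquet_add hmono hsuper (hf.const_mul _) (hg.const_mul _)
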